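/- Let d ≥ 1 and let μ, ν₁, …, ν_N be Borel probability measures on ℝ^d with finite second moments, α₁, …, α_N ≥ 0 with Σᵢ αᵢ = 1, and τ > 0. For each i, let γᵢ be a coupling attaining the infimum defining W²_{2,ub}(μ, νᵢ), with disintegration γᵢ = μ ⊗ γ_{i,x}, conditional means Tᵢ(x) = ∫ y dγ_{i,x}(y), and T̄(x) = Σᵢ αᵢ Tᵢ(x). If, with V(ρ) = Σᵢ αᵢ W²_{2,ub}(ρ, νᵢ), one has V(μ) ≤ V(T̄_#μ) (in particular, if μ minimizes V over Borel probability measures on ℝ^d with finite second moments), then T̄(x) = x for μ-almost every x, and hence T̄_#μ = μ, i.e., μ is a fixed point of the average map. -/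

import Mathlib

open MeasureTheory ENNReal

noncomputable section

/-- Euclidean space ℝ^d. -/
abbrev Ed (d : ℕ) := EuclideanSpace ℝ (Fin d)

/-- The entropy function ψ(t) = t log t − t + 1 (equal to 1 at t = 0 since log 0 = 0). -/
def entropyPsi (t : ℝ) : ℝ := t * Real.log t - t + 1

open Classical in
/-- The Csiszár divergence D_ψ(ρ‖ν) for the entropy function ψ. -/
def Dpsi {d : ℕ} (ρ ν : Measure (Ed d)) : ℝ≥0∞ :=
  if ρ ≪ ν then ∫⁻ y, ENNReal.ofReal (entropyPsi ((ρ.rnDeriv ν) y).toReal) ∂ν else ⊤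

/-- Squared unbalanced Wasserstein cost W²_{2,ub,τ}(μ,ν). -/
def UOTcost {d : ℕ} (τ : ℝ) (μ ν : Measure (Ed d)) : ℝ≥0∞ :=
  ⨅ (π : Measure (Ed d × Ed d)) (_ : π.map Prod.fst = μ),
    (∫⁻ p, ENNReal.ofReal (‖p.1 - p.2‖ ^ 2 / 2) ∂π)
      + ENNReal.ofReal τ * Dpsi (π.map Prod.snd) ν

/-- γ is an optimal coupling for the unbalanced problem W²_{2,ub,τ}(μ,ν). -/
def IsOptimalCoupling {d : ℕ} (τ : ℝ) (μ ν : Measure (Ed d))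
    (γ : Measure (Ed d × Ed d)) : Prop :=
  γ.map Prod.fst = μ ∧
    (∫⁻ p, ENNReal.ofReal (‖p.1 - p.2‖ ^ 2 / 2) ∂γ)
      + ENNReal.ofReal τ * Dpsi (γ.map Prod.snd) ν = UOTcost τ μ ν

/-- The Fréchet objective V(ρ) = Σᵢ αᵢ W²_{2,ub,τ}(ρ, νᵢ). -/
def Vfun {d : ℕ} (τ : ℝ) {N : ℕ} (α : Fin N → ℝ) (ν : Fin N → Measure (Ed d))
    (ρ : Measure (Ed d)) : ℝ≥0∞ :=
  ∑ i, ENNReal.ofReal (α i) * UOTcost τ ρ (ν i)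

/-!
Moving the first coordinate of each optimal plan `γᵢ` by `T̄` gives an admissible plan for
`(T̄#μ, νᵢ)` with the same second marginal, so `V(T̄#μ) ≤ Σ αᵢ (∫ ½‖T̄x − y‖² dγᵢ + τ D_ψ(γᵢ₂‖νᵢ))`.
On the other hand `T̄(x)` is the barycenter of the averaged conditional plan `Σ αᵢ γᵢ,ₓ`, so the
parallel axis theorem splits `Σ αᵢ ∫ ½‖x − y‖² dγᵢ` as `Σ αᵢ ∫ ½‖T̄x − y‖² dγᵢ + ∫ ½‖x − T̄x‖² dμ`.
Thus `V(μ)` equals the above bound on `V(T̄#μ)` plus `∫ ½‖x − T̄x‖² dμ`. Since `V(μ) ≤ V(T̄#μ)` and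
`V(μ) < ∞` (the product coupling has finite cost), this last integral vanishes.
-/

open scoped RealInnerProductSpace

section ParallelAxis

variable {E : Type*} [NormedAddCommGroup E] [InnerProductSpace ℝ E] [CompleteSpace E]
  [MeasurableSpace E] {m : Measure E} [IsProbabilityMeasure m]

theorem integral_norm_sub_sq_eq (hm : MemLp id 2 m) (z : E) :
    ∫ y, ‖z - y‖ ^ 2 ∂m = ‖z - ∫ y, y ∂m‖ ^ 2 + ∫ y, ‖(∫ y, y ∂m) - y‖ ^ 2 ∂m := by
  set b := ∫ y, y ∂m
  have hid : Integrable (fun y : E => y) m := hm.integrable one_le_two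
  have hb : Integrable (fun y => b - y) m := (integrable_const b).sub hid
  have hb2 : Integrable (fun y => ‖b - y‖ ^ 2) m :=
    ((memLp_const b).sub hm).integrable_norm_pow two_ne_zero
  have hcross : ∫ y, ⟪z - b, b - y⟫ ∂m = 0 := by
    rw [integral_inner hb, integral_sub (integrable_const b) hid, integral_const, probReal_univ,
      one_smul, sub_self, inner_zero_right]
  have hsplit : ∀ y, ‖z - y‖ ^ 2 = ‖z - b‖ ^ 2 + 2 * ⟪z - b, b - y⟫ + ‖b - y‖ ^ 2 := fun y => by
    rw [← norm_add_sq_real, sub_add_sub_cancel]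
  have hlin : Integrable (fun y => 2 * ⟪z - b, b - y⟫) m := (hb.const_inner _).const_mul 2
  have hconst_lin : Integrable (fun y => ‖z - b‖ ^ 2 + 2 * ⟪z - b, b - y⟫) m :=
    (integrable_const _).add hlin
  rw [show (fun y => ‖z - y‖ ^ 2) = _ from funext hsplit,
    integral_add hconst_lin hb2, integral_add (integrable_const _) hlin,
    integral_const_mul, hcross,
    integral_const, probReal_univ, one_smul, mul_zero, add_zero]

theorem lintegral_norm_sub_sq_eq (hm : MemLp id 2 m) (z : E) :
    ∫⁻ y, ENNReal.ofReal (‖z - y‖ ^ 2 / 2) ∂m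
      = ENNReal.ofReal (‖z - ∫ y, y ∂m‖ ^ 2 / 2)
        + ∫⁻ y, ENNReal.ofReal (‖(∫ y, y ∂m) - y‖ ^ 2 / 2) ∂m := by
  have hsq : ∀ c : E, Integrable (fun y => ‖c - y‖ ^ 2 / 2) m := fun c =>
    (((memLp_const c).sub hm).integrable_norm_pow two_ne_zero).div_const 2
  have hnn : ∀ c : E, 0 ≤ᵐ[m] fun y => ‖c - y‖ ^ 2 / 2 := fun c => .of_forall fun _ => by positivity
  rw [← ofReal_integral_eq_lintegral_ofReal (hsq z) (hnn z),
    ← ofReal_integral_eq_lintegral_ofReal (hsq _) (hnn _),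
    ← ENNReal.ofReal_add (by positivity) (integral_nonneg fun _ => by positivity),
    integral_div, integral_div, integral_norm_sub_sq_eq hm, add_div]

end ParallelAxis

section Mixture

variable {E : Type*} [MeasurableSpace E] {ι : Type*} [Fintype ι] {α : ι → ℝ}
  {m : ι → Measure E} [∀ i, IsProbabilityMeasure (m i)]

theorem isProbabilityMeasure_sum_ofReal_smul (hα : ∀ i, 0 ≤ α i) (hαsum : ∑ i, α i = 1) :
    IsProbabilityMeasure (∑ i, ENNReal.ofReal (α i) • m i) := by
  constructor
  simp [← ENNReal.ofReal_sum_of_nonneg fun i _ => hα i, hαsum]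

variable [NormedAddCommGroup E]

theorem memLp_id_two_sum_ofReal_smul (hm : ∀ i, MemLp id 2 (m i)) :
    MemLp id 2 (∑ i, ENNReal.ofReal (α i) • m i) := by
  have hid : Integrable id (∑ i, ENNReal.ofReal (α i) • m i) :=
    integrable_finsetSum_measure.mpr fun i _ =>
      ((hm i).integrable one_le_two).smul_measure ENNReal.ofReal_ne_top
  refine (memLp_two_iff_integrable_sq_norm hid.aestronglyMeasurable).mpr ?_
  exact integrable_finsetSum_measure.mpr fun i _ =>
    ((hm i).integrable_norm_pow two_ne_zero).smul_measure ENNReal.ofReal_ne_top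

theorem integral_id_sum_ofReal_smul [InnerProductSpace ℝ E] [CompleteSpace E]
    (hα : ∀ i, 0 ≤ α i) (hm : ∀ i, MemLp id 2 (m i)) :
    ∫ y, y ∂(∑ i, ENNReal.ofReal (α i) • m i) = ∑ i, α i • ∫ y, y ∂(m i) := by
  rw [integral_finsetSum_measure (f := fun y => y) fun i _ =>
    ((hm i).integrable one_le_two).smul_measure ENNReal.ofReal_ne_top]
  simp [integral_smul_measure, ENNReal.toReal_ofReal (hα _)]

theorem sum_lintegral_norm_sub_sq_eq [InnerProductSpace ℝ E] [CompleteSpace E]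
    (hα : ∀ i, 0 ≤ α i) (hαsum : ∑ i, α i = 1) (hm : ∀ i, MemLp id 2 (m i)) (z : E) :
    ∑ i, ENNReal.ofReal (α i) * ∫⁻ y, ENNReal.ofReal (‖z - y‖ ^ 2 / 2) ∂(m i)
      = ENNReal.ofReal (‖z - ∑ i, α i • ∫ y, y ∂(m i)‖ ^ 2 / 2)
        + ∑ i, ENNReal.ofReal (α i)
          * ∫⁻ y, ENNReal.ofReal (‖(∑ i, α i • ∫ y, y ∂(m i)) - y‖ ^ 2 / 2) ∂(m i) := by
  have := isProbabilityMeasure_sum_ofReal_smul (m := m) hα hαsum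
  simp_rw [← smul_eq_mul, ← lintegral_smul_measure, ← lintegral_finsetSum_measure,
    ← integral_id_sum_ofReal_smul hα hm]
  exact lintegral_norm_sub_sq_eq (memLp_id_two_sum_ofReal_smul hm) z

end Mixture

theorem memLp_id_two_of_lintegral_lt_top {E : Type*} [NormedAddCommGroup E] [MeasurableSpace E]
    [BorelSpace E] [SecondCountableTopology E] {m : Measure E} [IsFiniteMeasure m] (z : E)
    (h : ∫⁻ y, ENNReal.ofReal (‖z - y‖ ^ 2 / 2) ∂m < ⊤) : MemLp id 2 m := by
  have hmeas : AEStronglyMeasurable (fun y => z - y) m := by fun_prop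
  have hhalf : Integrable (fun y => ‖z - y‖ ^ 2 / 2) m :=
    ⟨by fun_prop, (hasFiniteIntegral_iff_ofReal (.of_forall fun _ => by positivity)).mpr h⟩
  have hsub : MemLp (fun y => z - y) 2 m :=
    (memLp_two_iff_integrable_sq_norm hmeas).mpr (by simpa using hhalf.mul_const 2)
  convert (memLp_const z).sub hsub using 1
  funext y
  simp

section UnbalancedCost

variable {d : ℕ}

def transportCost (S : Ed d → Ed d) (γ : Measure (Ed d × Ed d)) : ℝ≥0∞ :=
  ∫⁻ p, ENNReal.ofReal (‖S p.1 - p.2‖ ^ 2 / 2) ∂γ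

theorem Dpsi_self (ν : Measure (Ed d)) [SigmaFinite ν] : Dpsi ν ν = 0 := by
  rw [Dpsi, if_pos Measure.AbsolutelyContinuous.rfl]
  refine (lintegral_congr_ae ?_).trans lintegral_zero
  filter_upwards [Measure.rnDeriv_self ν] with y hy
  simp [hy, entropyPsi]

theorem UOTcost_map_le {τ : ℝ} {μ ν : Measure (Ed d)} {γ : Measure (Ed d × Ed d)}
    (hγ : γ.map Prod.fst = μ) {S : Ed d → Ed d} (hS : Measurable S) :
    UOTcost τ (μ.map S) ν ≤ transportCost S γ + ENNReal.ofReal τ * Dpsi (γ.map Prod.snd) ν := by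
  have hSid : Measurable (Prod.map S id : Ed d × Ed d → Ed d × Ed d) := hS.prodMap measurable_id
  have hfst : (γ.map (Prod.map S id)).map Prod.fst = μ.map S := by
    rw [Measure.map_map measurable_fst hSid, ← hγ, Measure.map_map hS measurable_fst]
    rfl
  have hsnd : (γ.map (Prod.map S id)).map Prod.snd = γ.map Prod.snd := by
    rw [Measure.map_map measurable_snd hSid]
    rfl
  have hcost : ∫⁻ p, ENNReal.ofReal (‖p.1 - p.2‖ ^ 2 / 2) ∂(γ.map (Prod.map S id))
      = transportCost S γ :=
    lintegral_map (by fun_prop) hSid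
  calc UOTcost τ (μ.map S) ν
      ≤ ∫⁻ p, ENNReal.ofReal (‖p.1 - p.2‖ ^ 2 / 2) ∂(γ.map (Prod.map S id))
        + ENNReal.ofReal τ * Dpsi ((γ.map (Prod.map S id)).map Prod.snd) ν :=
        iInf₂_le (γ.map (Prod.map S id)) hfst
    _ = _ := by rw [hcost, hsnd]

theorem UOTcost_lt_top (τ : ℝ) {μ ν : Measure (Ed d)} [IsProbabilityMeasure μ]
    [IsProbabilityMeasure ν] (hμ : Integrable (fun x => ‖x‖ ^ 2) μ)
    (hν : Integrable (fun y => ‖y‖ ^ 2) ν) : UOTcost τ μ ν < ⊤ := by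
  have hprod := UOTcost_map_le (τ := τ) (ν := ν) (Measure.fst_prod (μ := μ) (ν := ν)) measurable_id
  rw [Measure.map_id, show (μ.prod ν).map Prod.snd = ν from Measure.snd_prod, Dpsi_self,
    mul_zero, add_zero] at hprod
  refine hprod.trans_lt (lt_of_le_of_lt (lintegral_mono fun p => ?_)
    (hμ.comp_fst ν |>.add (hν.comp_snd μ)).lintegral_lt_top)
  refine ENNReal.ofReal_le_ofReal (show ‖p.1 - p.2‖ ^ 2 / 2 ≤ ‖p.1‖ ^ 2 + ‖p.2‖ ^ 2 by
    nlinarith [mul_self_le_mul_self (norm_nonneg _) (norm_sub_le p.1 p.2),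
      sq_nonneg (‖p.1‖ - ‖p.2‖)])

end UnbalancedCost

section Disintegration

variable {d : ℕ} {μ : Measure (Ed d)}

theorem transportCost_eq_lintegral_condKernel {γ : Measure (Ed d × Ed d)} [IsFiniteMeasure γ]
    (hγ : γ.map Prod.fst = μ) {S : Ed d → Ed d} (hS : Measurable S) :
    transportCost S γ = ∫⁻ x, ∫⁻ y, ENNReal.ofReal (‖S x - y‖ ^ 2 / 2) ∂γ.condKernel x ∂μ := by
  rw [← hγ]
  exact (Measure.lintegral_condKernel (by fun_prop)).symm

theorem ae_memLp_condKernel {γ : Measure (Ed d × Ed d)} [IsFiniteMeasure γ]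
    (hγ : γ.map Prod.fst = μ) (hfin : transportCost id γ ≠ ⊤) :
    ∀ᵐ x ∂μ, MemLp id 2 (γ.condKernel x) := by
  rw [transportCost_eq_lintegral_condKernel hγ measurable_id] at hfin
  filter_upwards [ae_lt_top (Measurable.lintegral_kernel_prod_right'
    (f := fun p => ENNReal.ofReal (‖id p.1 - p.2‖ ^ 2 / 2)) (by fun_prop)) hfin]
    with x hx
  exact memLp_id_two_of_lintegral_lt_top x hx

variable {ι : Type*} [Fintype ι]

def averageMap (α : ι → ℝ) (γ : ι → Measure (Ed d × Ed d)) [∀ i, IsFiniteMeasure (γ i)]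
    (x : Ed d) : Ed d :=
  ∑ i, α i • ∫ y, y ∂(γ i).condKernel x

variable {α : ι → ℝ} {γ : ι → Measure (Ed d × Ed d)} [∀ i, IsFiniteMeasure (γ i)]

@[fun_prop]
theorem measurable_averageMap : Measurable (averageMap α γ) := by
  refine Finset.measurable_sum _ fun i _ => Measurable.const_smul ?_ (α i)
  exact (StronglyMeasurable.integral_kernel_prod_right' (κ := (γ i).condKernel)
    (f := fun p : Ed d × Ed d => p.2) measurable_snd.stronglyMeasurable).measurable

theorem sum_transportCost_eq (hα : ∀ i, 0 ≤ α i) (hαsum : ∑ i, α i = 1)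
    (hγ : ∀ i, (γ i).map Prod.fst = μ) (hfin : ∀ i, transportCost id (γ i) ≠ ⊤) :
    ∑ i, ENNReal.ofReal (α i) * transportCost id (γ i)
      = ∑ i, ENNReal.ofReal (α i) * transportCost (averageMap α γ) (γ i)
        + ∫⁻ x, ENNReal.ofReal (‖x - averageMap α γ x‖ ^ 2 / 2) ∂μ := by
  have hdis : ∀ S : Ed d → Ed d, Measurable S →
      ∑ i, ENNReal.ofReal (α i) * transportCost S (γ i)
        = ∫⁻ x, ∑ i, ENNReal.ofReal (α i)
            * ∫⁻ y, ENNReal.ofReal (‖S x - y‖ ^ 2 / 2) ∂(γ i).condKernel x ∂μ := by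
    intro S hS
    have hmeas : ∀ i, Measurable fun x =>
        ∫⁻ y, ENNReal.ofReal (‖S x - y‖ ^ 2 / 2) ∂(γ i).condKernel x := fun i =>
      Measurable.lintegral_kernel_prod_right'
        (f := fun p => ENNReal.ofReal (‖S p.1 - p.2‖ ^ 2 / 2)) (by fun_prop)
    rw [lintegral_finsetSum _ fun i _ => (hmeas i).const_mul _]
    refine Finset.sum_congr rfl fun i _ => ?_
    rw [transportCost_eq_lintegral_condKernel (hγ i) hS, lintegral_const_mul _ (hmeas i)]
  rw [hdis id measurable_id, hdis _ measurable_averageMap, ← lintegral_add_right' _ (by fun_prop)]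
  refine lintegral_congr_ae ?_
  filter_upwards [ae_all_iff.mpr fun i => ae_memLp_condKernel (hγ i) (hfin i)] with x hx
  rw [add_comm]
  exact sum_lintegral_norm_sub_sq_eq hα hαsum hx x

end Disintegration

section FrechetObjective

variable {d N : ℕ} {τ : ℝ} {α : Fin N → ℝ} {μ : Measure (Ed d)} {ν : Fin N → Measure (Ed d)}
  {γ : Fin N → Measure (Ed d × Ed d)}

theorem Vfun_map_le (hγ : ∀ i, (γ i).map Prod.fst = μ) {S : Ed d → Ed d} (hS : Measurable S) :
    Vfun τ α ν (μ.map S)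
      ≤ ∑ i, ENNReal.ofReal (α i)
          * (transportCost S (γ i) + ENNReal.ofReal τ * Dpsi ((γ i).map Prod.snd) (ν i)) := by
  unfold Vfun
  gcongr with i
  exact UOTcost_map_le (hγ i) hS

theorem Vfun_eq_add_lintegral [∀ i, IsFiniteMeasure (γ i)] (hα : ∀ i, 0 ≤ α i)
    (hαsum : ∑ i, α i = 1) (hγ : ∀ i, IsOptimalCoupling τ μ (ν i) (γ i))
    (hfin : ∀ i, UOTcost τ μ (ν i) ≠ ⊤) :
    Vfun τ α ν μ
      = ∑ i, ENNReal.ofReal (α i) * (transportCost (averageMap α γ) (γ i)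
            + ENNReal.ofReal τ * Dpsi ((γ i).map Prod.snd) (ν i))
        + ∫⁻ x, ENNReal.ofReal (‖x - averageMap α γ x‖ ^ 2 / 2) ∂μ := by
  have hcost : ∀ i, transportCost id (γ i) ≠ ⊤ := fun i =>
    ne_top_of_le_ne_top (hfin i) ((hγ i).2 ▸ le_self_add)
  have hopt : ∀ i, UOTcost τ μ (ν i)
      = transportCost id (γ i) + ENNReal.ofReal τ * Dpsi ((γ i).map Prod.snd) (ν i) :=
    fun i => (hγ i).2.symm
  simp only [Vfun, hopt, mul_add, Finset.sum_add_distrib]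
  rw [sum_transportCost_eq hα hαsum (fun i => (hγ i).1) hcost]
  ring

end FrechetObjective

theorem minimizer_is_fixed_point_of_averageMap_general
    {d N : ℕ} (τ : ℝ)
    (μ : Measure (Ed d)) [IsProbabilityMeasure μ]
    (hμ : Integrable (fun x => ‖x‖ ^ 2) μ)
    (ν : Fin N → Measure (Ed d)) [∀ i, IsProbabilityMeasure (ν i)]
    (hν : ∀ i, Integrable (fun x => ‖x‖ ^ 2) (ν i))
    (α : Fin N → ℝ) (hα : ∀ i, 0 ≤ α i) (hαsum : ∑ i, α i = 1)
    (γ : Fin N → Measure (Ed d × Ed d)) [∀ i, IsFiniteMeasure (γ i)]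
    (hγ : ∀ i, IsOptimalCoupling τ μ (ν i) (γ i))
    (T : Fin N → Ed d → Ed d)
    (hT : ∀ i x, T i x = ∫ y, y ∂((γ i).condKernel x))
    (Tbar : Ed d → Ed d)
    (hTbar : ∀ x, Tbar x = ∑ i, α i • T i x)
    (hV : Vfun τ α ν μ ≤ Vfun τ α ν (μ.map Tbar)) :
    (∀ᵐ x ∂μ, Tbar x = x) ∧ μ.map Tbar = μ := by
  obtain rfl : Tbar = averageMap α γ := funext fun x => by simp only [hTbar, hT, averageMap]
  have hfin : ∀ i, UOTcost τ μ (ν i) ≠ ⊤ := fun i => (UOTcost_lt_top τ hμ (hν i)).ne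
  have hsplit := Vfun_eq_add_lintegral hα hαsum hγ hfin
  set A := ∑ i, ENNReal.ofReal (α i) * (transportCost (averageMap α γ) (γ i)
    + ENNReal.ofReal τ * Dpsi ((γ i).map Prod.snd) (ν i))
  set defect := ∫⁻ x, ENNReal.ofReal (‖x - averageMap α γ x‖ ^ 2 / 2) ∂μ
  have hA : A ≠ ⊤ := ne_top_of_le_ne_top
    (ENNReal.sum_ne_top.mpr fun i _ => ENNReal.mul_ne_top ENNReal.ofReal_ne_top (hfin i))
    (hsplit ▸ le_self_add)
  have hdefect : defect = 0 := by
    have h : A + defect ≤ A + 0 := by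
      rw [add_zero, ← hsplit]
      exact hV.trans (Vfun_map_le (fun i => (hγ i).1) measurable_averageMap)
    exact le_zero_iff.mp ((ENNReal.add_le_add_iff_left hA).mp h)
  have hfix : ∀ᵐ x ∂μ, averageMap α γ x = x := by
    filter_upwards [(lintegral_eq_zero_iff (by fun_prop)).mp hdefect] with x hx
    have hhalf : ‖x - averageMap α γ x‖ ^ 2 / 2 ≤ 0 := by simpa using hx
    have hsq : ‖x - averageMap α γ x‖ ^ 2 ≤ 0 := by linarith
    rw [sq_nonpos_iff, norm_eq_zero, sub_eq_zero] at hsq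
    exact hsq.symm
  exact ⟨hfix, by rw [Measure.map_congr hfix, Measure.map_id']⟩

theorem minimizer_is_fixed_point_of_averageMap
    {d N : ℕ} (hd : 1 ≤ d) (τ : ℝ) (hτ : 0 < τ)
    (μ : Measure (Ed d)) [IsProbabilityMeasure μ]
    (hμ : Integrable (fun x => ‖x‖ ^ 2) μ)
    (ν : Fin N → Measure (Ed d)) [∀ i, IsProbabilityMeasure (ν i)]
    (hν : ∀ i, Integrable (fun x => ‖x‖ ^ 2) (ν i))
    (α : Fin N → ℝ) (hα : ∀ i, 0 ≤ α i) (hαsum : ∑ i, α i = 1)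
    (γ : Fin N → Measure (Ed d × Ed d)) [∀ i, IsFiniteMeasure (γ i)]
    (hγ : ∀ i, IsOptimalCoupling τ μ (ν i) (γ i))
    (T : Fin N → Ed d → Ed d)
    (hT : ∀ i x, T i x = ∫ y, y ∂((γ i).condKernel x))
    (Tbar : Ed d → Ed d)
    (hTbar : ∀ x, Tbar x = ∑ i, α i • T i x)
    (hV : Vfun τ α ν μ ≤ Vfun τ α ν (μ.map Tbar)) :
    (∀ᵐ x ∂μ, Tbar x = x) ∧ μ.map Tbar = μ :=
  minimizer_is_fixed_point_of_averageMap_general τ μ hμ ν hν α hα hαsum γ hγ T hT Tbar hTbar hV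

end
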